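/- arXiv:1104.4585 — 2 statements merged into one kernel-verified Lean document; each statement's English description precedes it below -/
import Mathlib

section
/- Let A be a finitely generated torsion Λ-module, φ a non-degenerate hermitian form on A, F a Λ-submodule of A, and F^⊥ = {y ∈ A : φ(x,y) = 0 for all x ∈ F} its orthogonal with respect to φ. Then A = F ⊕ F^⊥ if and only if F ∩ F^⊥ = 0. -/
open LaurentPolynomial

set_option maxHeartbeats 1000000
set_option synthInstance.maxHeartbeats 400000

noncomputable section

/-- `Λ = ℚ[t,t⁻¹]`, the ring of Laurent polynomials over `ℚ`. -/
abbrev Λ : Type := LaurentPolynomial ℚ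

/-- The variable `t` of `Λ`. -/
def tΛ : Λ := T 1

/-- The involution `P(t) ↦ P(t⁻¹)` of `Λ`. -/
def lbar : Λ →+* Λ := (invert : Λ ≃ₐ[ℚ] Λ).toRingEquiv.toRingHom

/-- `P ∈ Λ` is symmetric if `P(t⁻¹) = P(t)`. -/
def SymmL (P : Λ) : Prop := lbar P = P

/-- The fraction field `ℚ(t)` of `Λ`. -/
abbrev KΛ : Type := FractionRing Λ

/-- The involution of `ℚ(t)` extending that of `Λ`. -/
def kbar : KΛ →+* KΛ :=
  (IsFractionRing.ringEquivOfRingEquiv (A := Λ) (B := Λ) (K := KΛ) (L := KΛ)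
    (invert : Λ ≃ₐ[ℚ] Λ).toRingEquiv).toRingHom

lemma kbar_algebraMap (P : Λ) : kbar (algebraMap Λ KΛ P) = algebraMap Λ KΛ (lbar P) := by
  simp [kbar, lbar]

/-- The image of `Λ` inside `ℚ(t)`, as a `Λ`-submodule of `ℚ(t)`. -/
def ΛinK : Submodule Λ KΛ := LinearMap.range (Algebra.linearMap Λ KΛ)

/-- The quotient `Λ`-module `ℚ(t)/Λ`. -/
abbrev QL : Type := KΛ ⧸ ΛinK

/-- The class in `ℚ(t)/Λ` of an element of `ℚ(t)`. -/
abbrev QLmk : KΛ →ₗ[Λ] QL := ΛinK.mkQ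

/-- The class of the fraction `P/Q` in `ℚ(t)/Λ`, for `P Q : Λ`. -/
def fracQ (P Q : Λ) : QL := QLmk (algebraMap Λ KΛ P / algebraMap Λ KΛ Q)

/-- The involution of `ℚ(t)/Λ` induced by `P(t) ↦ P(t⁻¹)`. -/
def qbar : QL → QL := fun x =>
  Quotient.liftOn x (fun a => QLmk (kbar a)) (by
    intro a b h
    obtain ⟨r, hr⟩ := (Submodule.quotientRel_def (p := ΛinK)).mp h
    apply (Submodule.Quotient.eq _).2
    refine ⟨lbar r, ?_⟩
    rw [← map_sub, ← hr]
    exact (kbar_algebraMap _).symm)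

lemma qbar_mk (a : KΛ) : qbar (QLmk a) = QLmk (kbar a) := rfl

/-- Evaluation of a Laurent polynomial at a nonzero rational number. -/
def evalL (q : ℚˣ) : Λ →ₐ[ℚ] ℚ :=
  AddMonoidAlgebra.lift ℚ ℚ ℤ ((Units.coeHom ℚ).comp (zpowersHom ℚˣ q))

/-- A hermitian form on a `Λ`-module `A`, with values in `ℚ(t)/Λ`:
it is `Λ`-linear in the first variable and conjugate-symmetric (hence
semilinear with respect to the involution in the second variable). -/
structure HermForm (A : Type*) [AddCommGroup A] [Module Λ A] where
  bil : A → A → QL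
  add_left : ∀ x y z : A, bil (x + y) z = bil x z + bil y z
  smul_left : ∀ (r : Λ) (x y : A), bil (r • x) y = r • bil x y
  conj_symm : ∀ x y : A, bil x y = qbar (bil y x)

/-- A hermitian form is non-degenerate if `φ(x,y) = 0` for all `y` implies `x = 0`. -/
def HermForm.Nondeg {A : Type*} [AddCommGroup A] [Module Λ A] (φ : HermForm A) : Prop :=
  ∀ x : A, (∀ y : A, φ.bil x y = 0) → x = 0

/-- Two hermitian forms are isometric if they differ by a `Λ`-module automorphism. -/
def HermForm.Isometric {A : Type*} [AddCommGroup A] [Module Λ A]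
    (φ₁ φ₂ : HermForm A) : Prop :=
  ∃ f : A ≃ₗ[Λ] A, ∀ x y : A, φ₂.bil x y = φ₁.bil (f x) (f y)

lemma qbar_add (u v : QL) : qbar (u + v) = qbar u + qbar v := by
  obtain ⟨a, rfl⟩ := Submodule.mkQ_surjective ΛinK u
  obtain ⟨b, rfl⟩ := Submodule.mkQ_surjective ΛinK v
  rw [← map_add, qbar_mk, qbar_mk, qbar_mk, map_add, map_add]

lemma kbar_smul (r : Λ) (a : KΛ) : kbar (r • a) = lbar r • kbar a := by
  have h1 : r • a = algebraMap Λ KΛ r * a := Algebra.smul_def r a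
  have h2 : lbar r • kbar a = algebraMap Λ KΛ (lbar r) * kbar a :=
    Algebra.smul_def (lbar r) (kbar a)
  rw [h1, h2, map_mul, kbar_algebraMap]

lemma qbar_smul (r : Λ) (u : QL) : qbar (r • u) = lbar r • qbar u := by
  obtain ⟨a, rfl⟩ := Submodule.mkQ_surjective ΛinK u
  rw [← map_smul, qbar_mk, qbar_mk, ← map_smul]
  congr 1
  exact kbar_smul r a

lemma qbar_zero : qbar (0 : QL) = 0 := by
  have : (0 : QL) = QLmk 0 := (map_zero QLmk).symm
  rw [this, qbar_mk, map_zero, map_zero]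

lemma HermForm.bil_zero_left' {A : Type} [AddCommGroup A] [Module Λ A]
    (φ : HermForm A) (y : A) : φ.bil 0 y = 0 := by
  have h := φ.add_left 0 0 y
  rw [add_zero] at h
  exact (add_eq_left.mp h.symm)

lemma HermForm.bil_zero_right {A : Type} [AddCommGroup A] [Module Λ A]
    (φ : HermForm A) (x : A) : φ.bil x 0 = 0 := by
  rw [φ.conj_symm, φ.bil_zero_left', qbar_zero]

lemma HermForm.add_right {A : Type} [AddCommGroup A] [Module Λ A]
    (φ : HermForm A) (x y z : A) : φ.bil x (y + z) = φ.bil x y + φ.bil x z := by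
  rw [φ.conj_symm x (y + z), φ.add_left, qbar_add, ← φ.conj_symm, ← φ.conj_symm]

lemma HermForm.smul_right {A : Type} [AddCommGroup A] [Module Λ A]
    (φ : HermForm A) (r : Λ) (x y : A) : φ.bil x (r • y) = lbar r • φ.bil x y := by
  rw [φ.conj_symm x (r • y), φ.smul_left, qbar_smul, ← φ.conj_symm]

/-- The orthogonal `F^⊥` of a submodule `F` with respect to a hermitian form `φ`. -/
def perp {A : Type} [AddCommGroup A] [Module Λ A] (φ : HermForm A)
    (F : Submodule Λ A) : Submodule Λ A where
  carrier := {y : A | ∀ x ∈ F, φ.bil x y = 0}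
  zero_mem' := fun x _ => φ.bil_zero_right x
  add_mem' := by
    intro y z hy hz x hx
    rw [φ.add_right, hy x hx, hz x hx, add_zero]
  smul_mem' := by
    intro r y hy x hx
    rw [φ.smul_right, hy x hx, smul_zero]

/-!
`A` is killed by `p(t)` for some monic `p ∈ ℚ[X]` with `p(0) ≠ 0`, and `Λ/(p) ≅ ℚ[X]/(p)`
because `t` is invertible modulo `p`; in particular `A` is finite-dimensional over `ℚ`.
The values of `φ` lie in the `p`-torsion of `ℚ(t)/Λ`, i.e. among the classes of `r/p`, and
`r/p ↦ (coefficient of X^(deg p - 1) in r mod p)` extends to a ℚ-linear functional `ℓ` on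
`ℚ(t)/Λ` that is nonzero on some `Λ`-multiple of every nonzero `p`-torsion element. Hence `F^⊥`
is the right orthogonal of `F` for the ℚ-bilinear form `ℓ ∘ φ`, so `dim F + dim F^⊥ ≥ dim A`,
and `F ∩ F^⊥ = 0` forces `F + F^⊥ = A`.
-/

open Polynomial

theorem LinearMap.exists_comp_eq_of_ker_le {K V W : Type*} [Field K] [AddCommGroup V]
    [Module K V] [AddCommGroup W] [Module K W] (f : V →ₗ[K] W) (g : V →ₗ[K] K)
    (h : ker f ≤ ker g) : ∃ ℓ : W →ₗ[K] K, ℓ ∘ₗ f = g := by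
  obtain ⟨ℓ, hℓ⟩ :=
    LinearMap.exists_extend ((ker f).liftQ g h ∘ₗ f.quotKerEquivRange.symm.toLinearMap)
  refine ⟨ℓ, LinearMap.ext fun v => ?_⟩
  have := LinearMap.congr_fun hℓ ⟨f v, mem_range_self f v⟩
  simpa [LinearMap.quotKerEquivRange_symm_apply_image] using this

theorem Module.Finite.of_isTorsionBySet {k R M : Type*} [Field k] [CommRing R] [Algebra k R]
    [AddCommGroup M] [Module R M] [Module k M] [IsScalarTower k R M] [Module.Finite R M]
    {I : Ideal R} [Module.Finite k (R ⧸ I)] (hM : Module.IsTorsionBySet R M I) :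
    Module.Finite k M := by
  let : Module (R ⧸ I) M := hM.module
  have : IsScalarTower R (R ⧸ I) M := hM.isScalarTower
  have : IsScalarTower k (R ⧸ I) M := hM.isScalarTower
  have : Module.Finite (R ⧸ I) M := Module.Finite.of_restrictScalars_finite R _ _
  exact Module.Finite.trans (R ⧸ I) M

namespace AdjoinRoot

variable {R : Type*} [CommRing R] {p : R[X]}

theorem isUnit_root (hp : IsUnit (p.coeff 0)) : IsUnit (root p) := by
  have h : root p * mk p (divX p) = -of p (p.coeff 0) := by
    have := congrArg (mk p) (X_mul_divX_add p)
    rw [map_add, map_mul, mk_X, mk_C, mk_self] at this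
    linear_combination this
  exact isUnit_of_mul_isUnit_left (h ▸ (hp.map (of p)).neg)

def topCoeff (hm : p.Monic) : AdjoinRoot p →ₗ[R] R :=
  lcoeff R (p.natDegree - 1) ∘ₗ modByMonicHom hm

theorem exists_topCoeff_root_pow_mul_ne_zero (hm : p.Monic) {z : AdjoinRoot p} (hz : z ≠ 0) :
    ∃ e : ℕ, topCoeff hm (root p ^ e * z) ≠ 0 := by
  have : Nontrivial (AdjoinRoot p) := ⟨⟨z, 0, hz⟩⟩
  have : Nontrivial R := (of p).domain_nontrivial
  obtain ⟨f, rfl⟩ := mk_surjective z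
  set g := f %ₘ p
  have hgf : mk p g = mk p f := by simpa [modByMonicHom_mk] using mk_leftInverse hm (mk p f)
  have hg : g ≠ 0 := by rintro hg; exact hz (by rw [← hgf, hg, map_zero])
  -- shifting `g` up by `X ^ e` puts its leading coefficient in degree `deg p - 1`
  obtain ⟨e, he⟩ := Nat.exists_eq_add_of_lt
    (natDegree_lt_natDegree hg (degree_modByMonic_lt f hm))
  have hlt : (X ^ e * g).degree < p.degree := by
    refine degree_lt_degree ?_
    rw [(monic_X_pow _).natDegree_mul' hg, natDegree_X_pow]
    omega
  refine ⟨e, ?_⟩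
  rw [← hgf, ← mk_X, ← map_pow, ← map_mul, topCoeff, LinearMap.comp_apply, modByMonicHom_mk,
    (modByMonic_eq_self_iff hm).2 hlt, lcoeff_apply, he, Nat.add_sub_cancel, coeff_X_pow_mul]
  exact leadingCoeff_ne_zero.2 hg

end AdjoinRoot

namespace LaurentPolynomial

theorem exists_monic_toLaurent_eq_mul {K : Type*} [Field K] {Δ : K[T;T⁻¹]} (hΔ : Δ ≠ 0) :
    ∃ p : K[X], p.Monic ∧ p.coeff 0 ≠ 0 ∧ ∃ u : K[T;T⁻¹], toLaurent p = u * Δ := by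
  obtain ⟨n, P, hP⟩ := exists_T_pow Δ
  have hP0 : P ≠ 0 := by
    rintro rfl
    exact mul_ne_zero hΔ (isUnit_T _).ne_zero (by rw [← hP, map_zero])
  obtain ⟨Q, hPQ, hXQ⟩ := exists_eq_pow_rootMultiplicity_mul_and_not_dvd P hP0 0
  rw [map_zero, sub_zero] at hPQ hXQ
  set m := P.rootMultiplicity 0
  have hQ0 : Q.coeff 0 ≠ 0 := mt X_dvd_iff.2 hXQ
  have hQ : Q ≠ 0 := by rintro rfl; simp at hQ0
  refine ⟨Q * Polynomial.C Q.leadingCoeff⁻¹, monic_mul_leadingCoeff_inv hQ, ?_,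
    LaurentPolynomial.C Q.leadingCoeff⁻¹ * T (n - m), ?_⟩
  · rw [coeff_mul_C]
    exact mul_ne_zero hQ0 (inv_ne_zero (leadingCoeff_ne_zero.2 hQ))
  · have hQ' : toLaurent Q = Δ * T n * T (-m) := by
      rw [← hP, hPQ, map_mul, toLaurent_X_pow, mul_right_comm, ← T_add, add_neg_cancel,
        T_zero, one_mul]
    rw [map_mul, toLaurent_C, hQ', sub_eq_add_neg, T_add]
    ring

variable {R : Type*} [CommRing R] {p : R[X]}

def evalRoot (hp : IsUnit (p.coeff 0)) : R[T;T⁻¹] →ₐ[R] AdjoinRoot p :=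
  { eval₂ (algebraMap R (AdjoinRoot p)) (AdjoinRoot.isUnit_root hp).unit with
    commutes' := eval₂_C _ _ }

variable (hp : IsUnit (p.coeff 0))

theorem evalRoot_toLaurent (P : R[X]) : evalRoot hp (toLaurent P) = AdjoinRoot.mk p P := by
  rw [← AdjoinRoot.aeval_eq, aeval_def]
  exact eval₂_toLaurent _ _ P

theorem evalRoot_T_natCast (n : ℕ) : evalRoot hp (T n) = AdjoinRoot.root p ^ n := by
  rw [← Polynomial.toLaurent_X_pow, evalRoot_toLaurent, map_pow, AdjoinRoot.mk_X]

theorem evalRoot_surjective : Function.Surjective (evalRoot hp) := fun z => by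
  obtain ⟨P, rfl⟩ := AdjoinRoot.mk_surjective z
  exact ⟨toLaurent P, evalRoot_toLaurent hp P⟩

theorem evalRoot_eq_zero_iff {r : R[T;T⁻¹]} : evalRoot hp r = 0 ↔ toLaurent p ∣ r := by
  obtain ⟨n, P, hP⟩ := exists_T_pow r
  have hr : r = toLaurent P * T (-n) := by
    rw [hP, mul_T_assoc, add_neg_cancel, T_zero, mul_one]
  constructor
  · intro h
    have : AdjoinRoot.mk p P = 0 := by rw [← evalRoot_toLaurent hp, hP, map_mul, h, zero_mul]
    obtain ⟨s, rfl⟩ := AdjoinRoot.mk_eq_zero.1 this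
    exact ⟨toLaurent s * T (-n), by rw [hr, map_mul, mul_assoc]⟩
  · rintro ⟨s, rfl⟩
    rw [map_mul, evalRoot_toLaurent, AdjoinRoot.mk_self, zero_mul]

end LaurentPolynomial

def fracQₗ (Δ : Λ) : Λ →ₗ[Λ] QL :=
  QLmk ∘ₗ LinearMap.toSpanSingleton Λ KΛ (algebraMap Λ KΛ Δ)⁻¹

theorem mem_ΛinK {a : KΛ} : a ∈ ΛinK ↔ ∃ s : Λ, algebraMap Λ KΛ s = a := Iff.rfl

theorem fracQₗ_eq_zero_iff {Δ : Λ} (hΔ : Δ ≠ 0) {r : Λ} : fracQₗ Δ r = 0 ↔ Δ ∣ r := by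
  have hΔK : algebraMap Λ KΛ Δ ≠ 0 := (map_ne_zero_iff _ (IsFractionRing.injective Λ KΛ)).2 hΔ
  simp only [fracQₗ, LinearMap.comp_apply, LinearMap.toSpanSingleton_apply, Submodule.mkQ_apply,
    Submodule.Quotient.mk_eq_zero, mem_ΛinK, Algebra.smul_def, eq_mul_inv_iff_mul_eq₀ hΔK]
  refine ⟨fun ⟨s, hs⟩ => ⟨s, ?_⟩, fun ⟨s, hs⟩ => ⟨s, ?_⟩⟩
  · apply IsFractionRing.injective Λ KΛ
    rw [← hs, map_mul, mul_comm]
  · rw [hs, map_mul, mul_comm]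

theorem exists_fracQₗ_eq {Δ : Λ} (hΔ : Δ ≠ 0) {u : QL} (hu : Δ • u = 0) :
    ∃ r : Λ, fracQₗ Δ r = u := by
  have hΔK : algebraMap Λ KΛ Δ ≠ 0 := (map_ne_zero_iff _ (IsFractionRing.injective Λ KΛ)).2 hΔ
  obtain ⟨a, rfl⟩ := Submodule.mkQ_surjective ΛinK u
  rw [← map_smul, Submodule.mkQ_apply, Submodule.Quotient.mk_eq_zero, mem_ΛinK] at hu
  obtain ⟨r, hr⟩ := hu
  refine ⟨r, congrArg QLmk ?_⟩
  rw [LinearMap.toSpanSingleton_apply, Algebra.smul_def, hr, Algebra.smul_def, mul_comm,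
    inv_mul_cancel_left₀ hΔK]

theorem exists_separating_functional {p : ℚ[X]} (hm : p.Monic) (hp : p.coeff 0 ≠ 0) :
    ∃ ℓ : QL →ₗ[ℚ] ℚ, ∀ u : QL, toLaurent p • u = 0 → u ≠ 0 → ∃ r : Λ, ℓ (r • u) ≠ 0 := by
  have hpΛ : (toLaurent p : Λ) ≠ 0 := Polynomial.toLaurent_ne_zero.2 hm.ne_zero
  set ev := evalRoot (Ne.isUnit hp)
  obtain ⟨ℓ, hℓ⟩ := LinearMap.exists_comp_eq_of_ker_le ((fracQₗ (toLaurent p)).restrictScalars ℚ)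
    (AdjoinRoot.topCoeff hm ∘ₗ ev.toLinearMap) fun r hr => by
      rw [LinearMap.mem_ker, LinearMap.restrictScalars_apply, fracQₗ_eq_zero_iff hpΛ,
        ← evalRoot_eq_zero_iff (Ne.isUnit hp)] at hr
      simp [hr, ev]
  refine ⟨ℓ, fun u hu hu0 => ?_⟩
  obtain ⟨r, rfl⟩ := exists_fracQₗ_eq hpΛ hu
  have hr : ev r ≠ 0 := by
    rwa [Ne, evalRoot_eq_zero_iff, ← fracQₗ_eq_zero_iff hpΛ]
  obtain ⟨e, he⟩ := AdjoinRoot.exists_topCoeff_root_pow_mul_ne_zero hm hr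
  refine ⟨T e, ?_⟩
  have := LinearMap.congr_fun hℓ (T e * r)
  simp only [LinearMap.comp_apply, LinearMap.restrictScalars_apply] at this
  rwa [← map_smul, smul_eq_mul, this, AlgHom.toLinearMap_apply, map_mul, evalRoot_T_natCast]

theorem exists_monic_isTorsionBy {A : Type*} [AddCommGroup A] [Module Λ A] [Module.Finite Λ A]
    (hA : Module.IsTorsion Λ A) :
    ∃ p : ℚ[X], p.Monic ∧ p.coeff 0 ≠ 0 ∧ Module.IsTorsionBy Λ A (toLaurent p) := by
  obtain ⟨Δ, hΔA, hΔ⟩ := Submodule.annihilator_top_inter_nonZeroDivisors hA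
  obtain ⟨p, hm, hp, u, hu⟩ := exists_monic_toLaurent_eq_mul (nonZeroDivisors.ne_zero hΔ)
  refine ⟨p, hm, hp, fun a => ?_⟩
  rw [hu, mul_smul, Submodule.mem_annihilator.1 hΔA a Submodule.mem_top, smul_zero]

theorem finiteDimensional_of_isTorsionBy {A : Type*} [AddCommGroup A] [Module Λ A] [Module ℚ A]
    [IsScalarTower ℚ Λ A] [Module.Finite Λ A] {p : ℚ[X]} (hm : p.Monic) (hp : p.coeff 0 ≠ 0)
    (hA : Module.IsTorsionBy Λ A (toLaurent p)) : FiniteDimensional ℚ A := by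
  set ev := evalRoot (Ne.isUnit hp)
  have : Module.Finite ℚ (AdjoinRoot p) := hm.finite_adjoinRoot
  have : Module.Finite ℚ (Λ ⧸ RingHom.ker ev) := Module.Finite.equiv
    (Ideal.quotientKerAlgEquivOfSurjective (evalRoot_surjective _)).symm.toLinearEquiv
  refine Module.Finite.of_isTorsionBySet (I := RingHom.ker ev) fun a r => ?_
  obtain ⟨s, hs⟩ := (evalRoot_eq_zero_iff _).1 r.2
  rw [hs, mul_comm, mul_smul, hA, smul_zero]

namespace HermForm

variable {A : Type} [AddCommGroup A] [Module Λ A] [Module ℚ A] [IsScalarTower ℚ Λ A]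

def toBilinForm (φ : HermForm A) (ℓ : QL →ₗ[ℚ] ℚ) : LinearMap.BilinForm ℚ A :=
  LinearMap.mk₂ ℚ (fun x y => ℓ (φ.bil x y))
    (fun x₁ x₂ y => by rw [φ.add_left, map_add])
    (fun q x y => by
      rw [← algebraMap_smul Λ q x, φ.smul_left, algebraMap_smul, map_smul, smul_eq_mul])
    (fun x y₁ y₂ => by rw [φ.add_right, map_add])
    (fun q x y => by
      rw [← algebraMap_smul Λ q y, φ.smul_right, lbar, RingEquiv.toRingHom_eq_coe,
        RingHom.coe_coe, AlgEquiv.coe_ringEquiv, AlgEquiv.commutes, algebraMap_smul, map_smul,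
        smul_eq_mul])

theorem orthogonal_toBilinForm (φ : HermForm A) {ℓ : QL →ₗ[ℚ] ℚ}
    (hℓ : ∀ x y : A, φ.bil x y ≠ 0 → ∃ r : Λ, ℓ (r • φ.bil x y) ≠ 0) (F : Submodule Λ A) :
    (φ.toBilinForm ℓ).orthogonal (F.restrictScalars ℚ) = (perp φ F).restrictScalars ℚ := by
  ext y
  simp only [LinearMap.BilinForm.mem_orthogonal_iff, Submodule.restrictScalars_mem]
  refine ⟨fun h x hx => by_contra fun hxy => ?_, fun h x hx => ?_⟩
  · obtain ⟨r, hr⟩ := hℓ x y hxy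
    exact hr (by rw [← φ.smul_left]; exact h _ (F.smul_mem r hx))
  · show ℓ (φ.bil x y) = 0
    rw [h x hx, map_zero]

theorem sup_perp_eq_top [FiniteDimensional ℚ A] (φ : HermForm A) {ℓ : QL →ₗ[ℚ] ℚ}
    (hℓ : ∀ x y : A, φ.bil x y ≠ 0 → ∃ r : Λ, ℓ (r • φ.bil x y) ≠ 0) {F : Submodule Λ A}
    (hF : F ⊓ perp φ F = ⊥) : F ⊔ perp φ F = ⊤ := by
  have hdim := LinearMap.BilinForm.finrank_add_finrank_orthogonal' (B := φ.toBilinForm ℓ)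
    (F.restrictScalars ℚ)
  rw [φ.orthogonal_toBilinForm hℓ] at hdim
  have hsup := Submodule.finrank_sup_add_finrank_inf_eq (F.restrictScalars ℚ)
    ((perp φ F).restrictScalars ℚ)
  rw [← Submodule.restrictScalars_inf, hF, Submodule.restrictScalars_bot, finrank_bot,
    add_zero] at hsup
  rw [← Submodule.restrictScalars_eq_top_iff ℚ, Submodule.restrictScalars_sup]
  apply Submodule.eq_top_of_finrank_eq
  have := Submodule.finrank_le (F.restrictScalars ℚ ⊔ (perp φ F).restrictScalars ℚ)
  omega

end HermForm

theorem stmt_7_general (A : Type) [AddCommGroup A] [Module Λ A] [Module.Finite Λ A]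
    (htors : Module.IsTorsion Λ A)
    (φ : HermForm A) (F : Submodule Λ A) :
    (F ⊔ perp φ F = ⊤ ∧ F ⊓ perp φ F = ⊥) ↔ F ⊓ perp φ F = ⊥ := by
  refine ⟨And.right, fun hF => ⟨?_, hF⟩⟩
  obtain ⟨p, hm, hp, hpA⟩ := exists_monic_isTorsionBy htors
  let : Module ℚ A := Module.compHom A (algebraMap ℚ Λ)
  have : IsScalarTower ℚ Λ A := IsScalarTower.of_compHom ℚ Λ A
  have : FiniteDimensional ℚ A := finiteDimensional_of_isTorsionBy hm hp hpA
  obtain ⟨ℓ, hℓ⟩ := exists_separating_functional hm hp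
  refine φ.sup_perp_eq_top (fun x y => hℓ _ ?_) hF
  rw [← φ.smul_left, hpA, φ.bil_zero_left']

/-- `A = F ⊕ F^⊥` if and only if `F ∩ F^⊥ = 0`. -/
theorem stmt_7 (A : Type) [AddCommGroup A] [Module Λ A] [Module.Finite Λ A]
    (htors : Module.IsTorsion Λ A)
    (φ : HermForm A) (hnd : φ.Nondeg) (F : Submodule Λ A) :
    (F ⊔ perp φ F = ⊤ ∧ F ⊓ perp φ F = ⊥) ↔ F ⊓ perp φ F = ⊥ :=
  stmt_7_general A htors φ F
end
end

section
/- Let Δ, P ∈ Λ with Δ symmetric, Δ(1) ≠ 0, and P symmetric and coprime to Δ. Then there exist an integer n ≥ 1, a hermitian matrix A ∈ Mₙ(Λ), and a nonzero rational number r, such that det(A) = rΔ and the (1,1)-cofactor of A equals −rP. -/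
open LaurentPolynomial

set_option maxHeartbeats 1000000
set_option synthInstance.maxHeartbeats 400000

noncomputable section

/-!
Symmetric Laurent polynomials are exactly the polynomials in `s = t + t⁻¹`, and `ℚ[s] ≅ ℚ[X]`
is Euclidean, so one may run the Euclidean algorithm on `(P, Δ)` inside `ℚ[X]`. Expanding along
the first row and column, the bordered matrix `(b e₀ᵀ; e₀ A)` has determinant
`b · det A - cof A` and cofactor `det A`. Hence if `d = q p - g` with `deg g < deg p` and a
symmetric `A` has `det A = r p`, `cof A = -r g`, bordering it with `b = -q` gives determinant
`-r d` and cofactor `r p`. The algorithm ends at `p = 0`, where `d` is a nonzero constant and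
`(0 1; 1 0)` works. A symmetric matrix over `ℚ[s]` is hermitian over `Λ`, since the involution
fixes `s`.
-/

namespace Matrix

variable {R : Type*} [CommRing R] {n : ℕ}

/-- The matrix `(b e₀ᵀ; e₀ A)`, where `e₀ = (1, 0, …, 0)`. -/
def border (b : R) (A : Matrix (Fin (n + 1)) (Fin (n + 1)) R) :
    Matrix (Fin (n + 2)) (Fin (n + 2)) R :=
  of (Fin.cons (Fin.cons b (Pi.single 0 1 : Fin (n + 1) → R))
    fun i => Fin.cons ((Pi.single 0 1 : Fin (n + 1) → R) i) (A i))

variable (b : R) (A : Matrix (Fin (n + 1)) (Fin (n + 1)) R)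

@[simp] lemma border_zero_zero : border b A 0 0 = b := rfl

@[simp] lemma border_zero_succ (j : Fin (n + 1)) :
    border b A 0 j.succ = (Pi.single 0 1 : Fin (n + 1) → R) j := rfl

@[simp] lemma border_succ_zero (i : Fin (n + 1)) :
    border b A i.succ 0 = (Pi.single 0 1 : Fin (n + 1) → R) i := rfl

@[simp] lemma border_succ_succ (i j : Fin (n + 1)) : border b A i.succ j.succ = A i j := rfl

@[simp] lemma border_zero_one : border b A 0 1 = 1 := rfl

@[simp] lemma border_one_zero : border b A 1 0 = 1 := rfl

@[simp] lemma border_submatrix_succ_succ : (border b A).submatrix Fin.succ Fin.succ = A := rfl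

lemma det_border :
    (border b A).det = b * A.det - (A.submatrix Fin.succ Fin.succ).det := by
  have minor : ((border b A).submatrix Fin.succ (Fin.succAbove 1)).det =
      (A.submatrix Fin.succ Fin.succ).det := by
    rw [det_succ_column_zero, Fin.sum_univ_succ]
    simp [Fin.succ_ne_zero, Function.comp_def]
    rfl
  rw [det_succ_row_zero, Fin.sum_univ_succ, Fin.sum_univ_succ]
  simp [Fin.succ_ne_zero, minor]
  ring

variable {A} in
lemma IsSymm.border (hA : A.IsSymm) : (border b A).IsSymm := by
  refine IsSymm.ext fun i j => ?_
  cases i using Fin.cases <;> cases j using Fin.cases <;> simp [hA.apply]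

end Matrix

namespace Polynomial

variable {K : Type*} [Field K]

theorem exists_isSymm_det_eq_C_mul (p d : K[X]) (hpd : IsCoprime p d) :
    ∃ (n : ℕ) (A : Matrix (Fin (n + 1)) (Fin (n + 1)) K[X]) (r : K), r ≠ 0 ∧ A.IsSymm ∧
      A.det = C r * d ∧ (A.submatrix Fin.succ Fin.succ).det = -(C r * p) := by
  induction p using degree_lt_wf.induction generalizing d with
  | _ p ih =>
  rcases eq_or_ne p 0 with rfl | hp
  · obtain ⟨c, hc, rfl⟩ := isUnit_iff.mp (isCoprime_zero_left.mp hpd)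
    refine ⟨1, !![0, 1; 1, 0], -c⁻¹, by simpa using hc.ne_zero, ?_, ?_, ?_⟩
    · exact Matrix.IsSymm.ext fun i j => by fin_cases i <;> fin_cases j <;> rfl
    · rw [Matrix.det_fin_two_of, ← C_mul, neg_mul, inv_mul_cancel₀ hc.ne_zero]
      simp
    · simp
  · set g := p * (d / p) - d
    have hg : g = -(d % p) := by linear_combination EuclideanDomain.div_add_mod d p
    have hgp : IsCoprime g p := by
      simpa [g, sub_eq_add_neg, add_comm] using (hpd.neg_right.add_mul_left_right (d / p)).symm
    obtain ⟨n, A, r, hr, hA, hdet, hcof⟩ :=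
      ih g (by rw [hg, degree_neg]; exact degree_mod_lt d hp) p hgp
    refine ⟨n + 1, A.border (-(d / p)), -r, neg_ne_zero.2 hr, hA.border _, ?_, ?_⟩
    · rw [Matrix.det_border, hdet, hcof]
      simp only [g, C_neg]
      ring
    · rw [Matrix.border_submatrix_succ_succ, hdet, C_neg]
      ring

end Polynomial

open scoped Polynomial

def polyAddInv : ℚ[X] →ₐ[ℚ] Λ := Polynomial.aeval (T 1 + T (-1))

lemma polyAddInv_C (c : ℚ) : polyAddInv (Polynomial.C c) = algebraMap ℚ Λ c :=
  Polynomial.aeval_C _ c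

lemma lbar_polyAddInv (f : ℚ[X]) : lbar (polyAddInv f) = polyAddInv f := by
  change invert (Polynomial.aeval _ f) = Polynomial.aeval _ f
  rw [← Polynomial.aeval_algHom_apply (invert : Λ ≃ₐ[ℚ] Λ)]
  simp [add_comm]

lemma T_add_T_neg_mem_range (n : ℤ) : T n + T (-n) ∈ polyAddInv.range := by
  suffices ∀ m : ℕ, T m + T (-m : ℤ) ∈ polyAddInv.range by
    obtain ⟨m, rfl | rfl⟩ := Int.eq_nat_or_neg n
    · exact this m
    · simpa [add_comm] using this m
  intro m
  refine ⟨Polynomial.dickson 1 1 m, ?_⟩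
  have hinv : (T 1 : Λ) * T (-1) = 1 := by rw [← T_add, add_neg_cancel, T_zero]
  change Polynomial.aeval _ _ = _
  rw [Polynomial.aeval_def, Polynomial.eval₂_eq_eval_map, Polynomial.map_dickson, map_one,
    Polynomial.dickson_one_one_eval_add_inv _ _ hinv, T_pow, T_pow]
  simp

lemma add_lbar_mem_range (x : Λ) : x + lbar x ∈ polyAddInv.range := by
  induction x using LaurentPolynomial.induction_on' with
  | add x y hx hy => simpa [add_add_add_comm] using add_mem hx hy
  | C_mul_T n a =>
    have : C a * T n + lbar (C a * T n) = a • (T n + T (-n)) := by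
      simp [lbar, smul_eq_C_mul]
    rw [this]
    exact Subalgebra.smul_mem _ (T_add_T_neg_mem_range n) a

lemma SymmL.mem_range {F : Λ} (hF : SymmL F) : F ∈ polyAddInv.range := by
  have h := add_lbar_mem_range F
  rw [hF, ← two_smul ℚ] at h
  simpa using Subalgebra.smul_mem _ h (2⁻¹ : ℚ)

lemma evalL_T (q : ℚˣ) (n : ℤ) : evalL q (T n) = ((q ^ n : ℚˣ) : ℚ) := by
  change AddMonoidAlgebra.lift ℚ ℚ ℤ _ (AddMonoidAlgebra.single n 1) = _
  rw [AddMonoidAlgebra.lift_single]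
  simp

lemma evalL_polyAddInv (q : ℚˣ) (f : ℚ[X]) :
    evalL q (polyAddInv f) = f.eval ((q : ℚ) + (q : ℚ)⁻¹) := by
  rw [polyAddInv, ← Polynomial.aeval_algHom_apply, map_add, evalL_T, evalL_T,
    Polynomial.aeval_def, Polynomial.eval₂_eq_eval_map]
  simp

lemma polyAddInv_injective : Function.Injective polyAddInv := by
  refine (injective_iff_map_eq_zero _).2 fun f hf => Polynomial.eq_zero_of_infinite_isRoot f ?_
  refine Set.infinite_of_not_bddAbove fun ⟨M, hM⟩ => ?_
  set q : ℚ := max M 0 + 1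
  have hq : 0 < q := by positivity
  have hroot : f.IsRoot (q + q⁻¹) := by
    simpa [hf] using (evalL_polyAddInv (Units.mk0 q hq.ne') f).symm
  have := hM hroot
  linarith [le_max_left M 0, inv_pos.2 hq]

lemma isCoprime_of_isCoprime_polyAddInv {p d : ℚ[X]}
    (h : IsCoprime (polyAddInv p) (polyAddInv d)) : IsCoprime p d := by
  obtain ⟨u, v, huv⟩ := h
  obtain ⟨a, ha⟩ := (AlgHom.mem_range _).1 (add_lbar_mem_range u)
  obtain ⟨b, hb⟩ := (AlgHom.mem_range _).1 (add_lbar_mem_range v)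
  have hbar : lbar u * polyAddInv p + lbar v * polyAddInv d = 1 := by
    simpa [lbar_polyAddInv] using congrArg lbar huv
  have h2 : a * p + b * d = Polynomial.C 2 := polyAddInv_injective <| by
    rw [polyAddInv_C, map_ofNat, map_add, map_mul, map_mul, ha, hb]
    linear_combination huv + hbar
  refine ⟨Polynomial.C 2⁻¹ * a, Polynomial.C 2⁻¹ * b, ?_⟩
  rw [mul_assoc, mul_assoc, ← mul_add, h2, ← Polynomial.C_mul, inv_mul_cancel₀ two_ne_zero,
    Polynomial.C_1]

theorem stmt_12_general (Δ P : Λ) (hΔsym : SymmL Δ)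
    (hPsym : SymmL P) (hcop : IsCoprime P Δ) :
    ∃ (n : ℕ) (Amat : Matrix (Fin (n + 1)) (Fin (n + 1)) Λ) (r : ℚ),
      r ≠ 0 ∧
      (∀ i j, lbar (Amat i j) = Amat j i) ∧
      Amat.det = algebraMap ℚ Λ r * Δ ∧
      (Amat.submatrix Fin.succ Fin.succ).det = -(algebraMap ℚ Λ r * P) := by
  obtain ⟨p, rfl⟩ := (AlgHom.mem_range _).1 hPsym.mem_range
  obtain ⟨d, rfl⟩ := (AlgHom.mem_range _).1 hΔsym.mem_range
  obtain ⟨n, A, r, hr, hA, hdet, hcof⟩ :=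
    Polynomial.exists_isSymm_det_eq_C_mul p d (isCoprime_of_isCoprime_polyAddInv hcop)
  have map_det {m : ℕ} (M : Matrix (Fin m) (Fin m) ℚ[X]) :
      (M.map polyAddInv).det = polyAddInv M.det := (polyAddInv.map_det M).symm
  refine ⟨n, A.map polyAddInv, r, hr, fun i j => ?_, ?_, ?_⟩
  · simp [lbar_polyAddInv, hA.apply]
  · rw [map_det, hdet, map_mul, polyAddInv_C]
  · rw [Matrix.submatrix_map, map_det, hcof, map_neg, map_mul, polyAddInv_C]

/-- realization of `(Δ, P)` by a hermitian matrix with prescribed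
determinant and `(1,1)`-cofactor. -/
theorem stmt_12 (Δ P : Λ) (hΔsym : SymmL Δ) (hΔ1 : evalL 1 Δ ≠ 0)
    (hPsym : SymmL P) (hcop : IsCoprime P Δ) :
    ∃ (n : ℕ) (Amat : Matrix (Fin (n + 1)) (Fin (n + 1)) Λ) (r : ℚ),
      r ≠ 0 ∧
      (∀ i j, lbar (Amat i j) = Amat j i) ∧
      Amat.det = algebraMap ℚ Λ r * Δ ∧
      (Amat.submatrix Fin.succ Fin.succ).det = -(algebraMap ℚ Λ r * P) :=
  stmt_12_general Δ P hΔsym hPsym hcop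
end
end
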